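/- arXiv:1409.6131 — 4 statements merged into one kernel-verified Lean document; each statement's English description precedes it below -/
import Mathlib

section
/- For all complex numbers a, b, c, sin(a)/(cos(a) - cos(b+c)) - sin(a)/(cos(a) - cos(b-c)) = sin(c)/(cos(c) - cos(a+b)) - sin(c)/(cos(c) - cos(a-b)), provided all denominators are nonzero. -/
open Complex

theorem trig_identity_odd (a b c : ℂ)
    (h1 : Complex.cos a - Complex.cos (b + c) ≠ 0)
    (h2 : Complex.cos a - Complex.cos (b - c) ≠ 0)
    (h3 : Complex.cos c - Complex.cos (a + b) ≠ 0)
    (h4 : Complex.cos c - Complex.cos (a - b) ≠ 0) :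
    Complex.sin a / (Complex.cos a - Complex.cos (b + c)) -
      Complex.sin a / (Complex.cos a - Complex.cos (b - c)) =
    Complex.sin c / (Complex.cos c - Complex.cos (a + b))
      - Complex.sin c / (Complex.cos c - Complex.cos (a - b)) := by
  have sa := Complex.sin_sq_add_cos_sq a
  have sb := Complex.sin_sq_add_cos_sq b
  have sc := Complex.sin_sq_add_cos_sq c
  have key : (Complex.cos a - Complex.cos (b + c)) * (Complex.cos a - Complex.cos (b - c)) =
      (Complex.cos c - Complex.cos (a + b)) * (Complex.cos c - Complex.cos (a - b)) := by
    simp only [Complex.cos_add, Complex.cos_sub]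
    linear_combination (Complex.sin b) ^ 2 * sa - (Complex.sin b) ^ 2 * sc + ((Complex.cos c) ^ 2 - (Complex.cos a) ^ 2) * sb
  rw [div_sub_div _ _ h1 h2, div_sub_div _ _ h3 h4, key]
  congr 1
  simp only [Complex.cos_add, Complex.cos_sub]
  ring
end

section
/- With φ₁ = π + θ₀ + θ, φ₂ = π + θ₀ - θ, φ₃ = π - θ₀ + θ, φ₄ = π - θ₀ - θ, ν = 2/3, β_i = sin(ν φ_i)/(cosh(ν η) - cos(ν φ_i)), β^D = -β₁ + β₂ + β₃ - β₄, and G as defined below, the identity sin(2θ₀/3)·(G(θ + iη, θ₀) + G(θ - iη, θ₀)) = -β^D holds for all real η, θ, θ₀ for which all denominators are nonzero. -/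
open Complex Real

noncomputable def G (α θ₀ : ℂ) : ℂ :=
  1 / (Complex.cos (2 * θ₀ / 3) - Complex.cos (2 * (α - Real.pi) / 3)) -
    1 / (Complex.cos (2 * θ₀ / 3) - Complex.cos (2 * (α + Real.pi) / 3))

lemma core (a w h : ℂ)
    (d1 : Complex.cos a - Complex.cos (w + h) ≠ 0)
    (d2 : Complex.cos a - Complex.cos (w - h) ≠ 0)
    (d3 : Complex.cos h - Complex.cos (w - a) ≠ 0)
    (d4 : Complex.cos h - Complex.cos (w + a) ≠ 0) :
    Complex.sin a * (1 / (Complex.cos a - Complex.cos (w + h))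
      + 1 / (Complex.cos a - Complex.cos (w - h))) =
    Complex.sin (w - a) / (Complex.cos h - Complex.cos (w - a))
      - Complex.sin (w + a) / (Complex.cos h - Complex.cos (w + a)) := by
  have ha := Complex.sin_sq_add_cos_sq a
  have hw := Complex.sin_sq_add_cos_sq w
  have hh := Complex.sin_sq_add_cos_sq h
  simp only [Complex.cos_add, Complex.cos_sub, Complex.sin_add, Complex.sin_sub] at d1 d2 d3 d4 ⊢
  set sa := Complex.sin a
  set ca := Complex.cos a
  set sw := Complex.sin w
  set cw := Complex.cos w
  set sh := Complex.sin h
  set ch := Complex.cos h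
  have E : (ca - (cw*ch - sw*sh)) * (ca - (cw*ch + sw*sh))
      = (ch - (cw*ca + sw*sa)) * (ch - (cw*ca - sw*sa)) := by
    linear_combination (ch^2 - ca^2) * hw + sw^2 * ha - sw^2 * hh
  rw [div_add_div _ _ d1 d2, div_sub_div _ _ d3 d4, mul_div_assoc',
    div_eq_div_iff (mul_ne_zero d1 d2) (mul_ne_zero d3 d4)]
  linear_combination (-2*sa*ca*((ch-(cw*ca+sw*sa))*(ch-(cw*ca-sw*sa)))) * hw +
    (-((sw*ca - cw*sa)*(ch-(cw*ca-sw*sa)) - (sw*ca+cw*sa)*(ch-(cw*ca+sw*sa)))) * E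

set_option maxHeartbeats 1000000 in
theorem G_beta_identity (η θ θ₀ : ℝ)
    (φ₁ φ₂ φ₃ φ₄ : ℝ)
    (hφ₁ : φ₁ = Real.pi + θ₀ + θ) (hφ₂ : φ₂ = Real.pi + θ₀ - θ)
    (hφ₃ : φ₃ = Real.pi - θ₀ + θ) (hφ₄ : φ₄ = Real.pi - θ₀ - θ)
    (ν : ℝ) (hν : ν = 2 / 3)
    (β₁ β₂ β₃ β₄ βD : ℝ)
    (hβ₁ : β₁ = Real.sin (ν * φ₁) / (Real.cosh (ν * η) - Real.cos (ν * φ₁)))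
    (hβ₂ : β₂ = Real.sin (ν * φ₂) / (Real.cosh (ν * η) - Real.cos (ν * φ₂)))
    (hβ₃ : β₃ = Real.sin (ν * φ₃) / (Real.cosh (ν * η) - Real.cos (ν * φ₃)))
    (hβ₄ : β₄ = Real.sin (ν * φ₄) / (Real.cosh (ν * η) - Real.cos (ν * φ₄)))
    (hβD : βD = -β₁ + β₂ + β₃ - β₄)
    (hd₁ : Real.cosh (ν * η) - Real.cos (ν * φ₁) ≠ 0)
    (hd₂ : Real.cosh (ν * η) - Real.cos (ν * φ₂) ≠ 0)
    (hd₃ : Real.cosh (ν * η) - Real.cos (ν * φ₃) ≠ 0)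
    (hd₄ : Real.cosh (ν * η) - Real.cos (ν * φ₄) ≠ 0)
    (hD1 : Complex.cos (2 * (θ₀ : ℂ) / 3) -
      Complex.cos (2 * (((θ : ℂ) + Complex.I * η) - Real.pi) / 3) ≠ 0)
    (hD2 : Complex.cos (2 * (θ₀ : ℂ) / 3) -
      Complex.cos (2 * (((θ : ℂ) + Complex.I * η) + Real.pi) / 3) ≠ 0)
    (hD3 : Complex.cos (2 * (θ₀ : ℂ) / 3) -
      Complex.cos (2 * (((θ : ℂ) - Complex.I * η) - Real.pi) / 3) ≠ 0)
    (hD4 : Complex.cos (2 * (θ₀ : ℂ) / 3) -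
      Complex.cos (2 * (((θ : ℂ) - Complex.I * η) + Real.pi) / 3) ≠ 0) :
    Complex.sin (2 * (θ₀ : ℂ) / 3) *
      (G ((θ : ℂ) + Complex.I * η) θ₀ + G ((θ : ℂ) - Complex.I * η) θ₀) =
      -(βD : ℂ) := by
  subst hφ₁ hφ₂ hφ₃ hφ₄ hν hβ₁ hβ₂ hβ₃ hβ₄ hβD
  -- notation
  set aC : ℂ := 2 * (θ₀ : ℂ) / 3 with haC
  set hC : ℂ := ((2 / 3 * η : ℝ) : ℂ) * Complex.I with hhC
  set wm : ℂ := 2 * (θ : ℂ) / 3 - 2 * (Real.pi : ℂ) / 3 with hwm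
  set wp : ℂ := 2 * (θ : ℂ) / 3 + 2 * (Real.pi : ℂ) / 3 with hwp
  have hcosh : Complex.cos hC = ((Real.cosh (2 / 3 * η) : ℝ) : ℂ) := by
    rw [hhC, Complex.cos_mul_I, Complex.ofReal_cosh]
  -- argument identities
  have e1 : (2 : ℂ) * (((θ : ℂ) + Complex.I * η) - Real.pi) / 3 = wm + hC := by
    rw [hwm, hhC]; push_cast; ring
  have e2 : (2 : ℂ) * (((θ : ℂ) + Complex.I * η) + Real.pi) / 3 = wp + hC := by
    rw [hwp, hhC]; push_cast; ring
  have e3 : (2 : ℂ) * (((θ : ℂ) - Complex.I * η) - Real.pi) / 3 = wm - hC := by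
    rw [hwm, hhC]; push_cast; ring
  have e4 : (2 : ℂ) * (((θ : ℂ) - Complex.I * η) + Real.pi) / 3 = wp - hC := by
    rw [hwp, hhC]; push_cast; ring
  -- real-arg identities
  have a1 : wp + aC = ((2 / 3 * (Real.pi + θ₀ + θ) : ℝ) : ℂ) := by
    rw [hwp, haC]; push_cast; ring
  have a2 : wm - aC = -((2 / 3 * (Real.pi + θ₀ - θ) : ℝ) : ℂ) := by
    rw [hwm, haC]; push_cast; ring
  have a3 : wp - aC = ((2 / 3 * (Real.pi - θ₀ + θ) : ℝ) : ℂ) := by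
    rw [hwp, haC]; push_cast; ring
  have a4 : wm + aC = -((2 / 3 * (Real.pi - θ₀ - θ) : ℝ) : ℂ) := by
    rw [hwm, haC]; push_cast; ring
  -- denominator nonvanishing, complex side
  have d1m : Complex.cos aC - Complex.cos (wm + hC) ≠ 0 := by rw [← e1]; exact hD1
  have d2m : Complex.cos aC - Complex.cos (wm - hC) ≠ 0 := by rw [← e3]; exact hD3
  have d1p : Complex.cos aC - Complex.cos (wp + hC) ≠ 0 := by rw [← e2]; exact hD2
  have d2p : Complex.cos aC - Complex.cos (wp - hC) ≠ 0 := by rw [← e4]; exact hD4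
  -- denominator nonvanishing, real side
  have d3m : Complex.cos hC - Complex.cos (wm - aC) ≠ 0 := by
    rw [hcosh, a2, Complex.cos_neg, ← Complex.ofReal_cos, ← Complex.ofReal_sub]
    exact_mod_cast hd₂
  have d4m : Complex.cos hC - Complex.cos (wm + aC) ≠ 0 := by
    rw [hcosh, a4, Complex.cos_neg, ← Complex.ofReal_cos, ← Complex.ofReal_sub]
    exact_mod_cast hd₄
  have d3p : Complex.cos hC - Complex.cos (wp - aC) ≠ 0 := by
    rw [hcosh, a3, ← Complex.ofReal_cos, ← Complex.ofReal_sub]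
    exact_mod_cast hd₃
  have d4p : Complex.cos hC - Complex.cos (wp + aC) ≠ 0 := by
    rw [hcosh, a1, ← Complex.ofReal_cos, ← Complex.ofReal_sub]
    exact_mod_cast hd₁
  have R1 := core aC wm hC d1m d2m d3m d4m
  have R2 := core aC wp hC d1p d2p d3p d4p
  rw [hcosh, a2, a4, Complex.cos_neg, Complex.cos_neg, Complex.sin_neg, Complex.sin_neg,
    ← Complex.ofReal_cos, ← Complex.ofReal_cos, ← Complex.ofReal_sin, ← Complex.ofReal_sin] at R1
  rw [hcosh, a1, a3,
    ← Complex.ofReal_cos, ← Complex.ofReal_cos, ← Complex.ofReal_sin, ← Complex.ofReal_sin] at R2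
  simp only [G, e1, e2, e3, e4]
  simp only [Complex.ofReal_neg, Complex.ofReal_add, Complex.ofReal_sub, Complex.ofReal_div]
  linear_combination R1 - R2
end

section
/- With φ_i as below, β̃_i = sinh(2η/3)/(cosh(2η/3) - cos(2φ_i/3)), β̃^D = β̃₁ + β̃₂ - β̃₃ - β̃₄, and G as defined below, the identity sin(2θ₀/3)·(G(θ + iη, θ₀) - G(θ - iη, θ₀)) = -i·β̃^D holds for all real η, θ, θ₀ for which all denominators are nonzero. -/
open Complex Real

set_option maxHeartbeats 4000000 in
private lemma key_pf (A A' X X' P P' Y Y' : ℂ)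
    (hA : A * A' = 1) (hX : X * X' = 1) (hP : P * P' = 1) (hY : Y * Y' = 1)
    (h1 : (A + A')/2 - (X*Y'*P' + X'*Y*P)/2 ≠ 0)
    (h2 : (A + A')/2 - (X*Y'*P + X'*Y*P')/2 ≠ 0)
    (h3 : (A + A')/2 - (X*Y*P' + X'*Y'*P)/2 ≠ 0)
    (h4 : (A + A')/2 - (X*Y*P + X'*Y'*P')/2 ≠ 0)
    (he1 : (Y + Y')/2 - (P*A*X + P'*A'*X')/2 ≠ 0)
    (he2 : (Y + Y')/2 - (P*A*X' + P'*A'*X)/2 ≠ 0)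
    (he3 : (Y + Y')/2 - (P*A'*X + P'*A*X')/2 ≠ 0)
    (he4 : (Y + Y')/2 - (P*A'*X' + P'*A*X)/2 ≠ 0) :
    (A - A')/2 *
      ((1/((A + A')/2 - (X*Y'*P' + X'*Y*P)/2) -
        1/((A + A')/2 - (X*Y'*P + X'*Y*P')/2)) -
       (1/((A + A')/2 - (X*Y*P' + X'*Y'*P)/2) -
        1/((A + A')/2 - (X*Y*P + X'*Y'*P')/2))) =
    (Y - Y')/2 / ((Y + Y')/2 - (P*A*X + P'*A'*X')/2) +
    (Y - Y')/2 / ((Y + Y')/2 - (P*A*X' + P'*A'*X)/2) -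
    (Y - Y')/2 / ((Y + Y')/2 - (P*A'*X + P'*A*X')/2) -
    (Y - Y')/2 / ((Y + Y')/2 - (P*A'*X' + P'*A*X)/2) := by
  have hprod1 : ((A + A')/2 - (X*Y'*P' + X'*Y*P)/2) * ((A + A')/2 - (X*Y*P' + X'*Y'*P)/2) =
      ((Y + Y')/2 - (P*A*X' + P'*A'*X)/2) * ((Y + Y')/2 - (P*A'*X' + P'*A*X)/2) := by
    linear_combination ((1/2 : ℂ) + (-1/4)*X'^2*P^2 + (-1/4)*X^2*P'^2) * hA +
      ((1/4 : ℂ)*P*P'*Y'^2 + (1/4)*P*P'*Y^2 + (-1/4)*A'^2*P*P' + (-1/4)*A^2*P*P') * hX +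
      ((1/4 : ℂ)*Y'^2 + (1/4)*Y^2 + (-1/4)*A'^2 + (-1/4)*A^2) * hP +
      ((-1/2 : ℂ) + (1/4)*X'^2*P^2 + (1/4)*X^2*P'^2) * hY
  have hprod2 : ((A + A')/2 - (X*Y'*P + X'*Y*P')/2) * ((A + A')/2 - (X*Y*P + X'*Y'*P')/2) =
      ((Y + Y')/2 - (P*A'*X + P'*A*X')/2) * ((Y + Y')/2 - (P*A*X + P'*A'*X')/2) := by
    linear_combination ((1/2 : ℂ) + (-1/4)*X'^2*P'^2 + (-1/4)*X^2*P^2) * hA +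
      ((1/4 : ℂ)*P*P'*Y'^2 + (1/4)*P*P'*Y^2 + (-1/4)*A'^2*P*P' + (-1/4)*A^2*P*P') * hX +
      ((1/4 : ℂ)*Y'^2 + (1/4)*Y^2 + (-1/4)*A'^2 + (-1/4)*A^2) * hP +
      ((-1/2 : ℂ) + (1/4)*X'^2*P'^2 + (1/4)*X^2*P^2) * hY
  have p1 : (A - A')/2 *
      (1/((A + A')/2 - (X*Y'*P' + X'*Y*P)/2) - 1/((A + A')/2 - (X*Y*P' + X'*Y'*P)/2)) =
      (Y - Y')/2 / ((Y + Y')/2 - (P*A*X' + P'*A'*X)/2) -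
      (Y - Y')/2 / ((Y + Y')/2 - (P*A'*X' + P'*A*X)/2) := by
    rw [div_sub_div _ _ h1 h3, hprod1, div_sub_div _ _ he2 he4, ← mul_div_assoc]
    congr 1
    ring
  have p2 : (A - A')/2 *
      (1/((A + A')/2 - (X*Y'*P + X'*Y*P')/2) - 1/((A + A')/2 - (X*Y*P + X'*Y'*P')/2)) =
      (Y - Y')/2 / ((Y + Y')/2 - (P*A'*X + P'*A*X')/2) -
      (Y - Y')/2 / ((Y + Y')/2 - (P*A*X + P'*A'*X')/2) := by
    rw [div_sub_div _ _ h2 h4, hprod2, div_sub_div _ _ he3 he1, ← mul_div_assoc]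
    congr 1
    ring
  linear_combination p1 - p2

set_option maxHeartbeats 2000000 in
theorem G_beta_tilde_identity (η θ θ₀ : ℝ)
    (φ₁ φ₂ φ₃ φ₄ : ℝ)
    (hφ₁ : φ₁ = Real.pi + θ₀ + θ) (hφ₂ : φ₂ = Real.pi + θ₀ - θ)
    (hφ₃ : φ₃ = Real.pi - θ₀ + θ) (hφ₄ : φ₄ = Real.pi - θ₀ - θ)
    (βt₁ βt₂ βt₃ βt₄ βtD : ℝ)
    (hβ₁ : βt₁ = Real.sinh (2 * η / 3) / (Real.cosh (2 * η / 3) - Real.cos (2 * φ₁ / 3)))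
    (hβ₂ : βt₂ = Real.sinh (2 * η / 3) / (Real.cosh (2 * η / 3) - Real.cos (2 * φ₂ / 3)))
    (hβ₃ : βt₃ = Real.sinh (2 * η / 3) / (Real.cosh (2 * η / 3) - Real.cos (2 * φ₃ / 3)))
    (hβ₄ : βt₄ = Real.sinh (2 * η / 3) / (Real.cosh (2 * η / 3) - Real.cos (2 * φ₄ / 3)))
    (hβD : βtD = βt₁ + βt₂ - βt₃ - βt₄)
    (hd₁ : Real.cosh (2 * η / 3) - Real.cos (2 * φ₁ / 3) ≠ 0)
    (hd₂ : Real.cosh (2 * η / 3) - Real.cos (2 * φ₂ / 3) ≠ 0)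
    (hd₃ : Real.cosh (2 * η / 3) - Real.cos (2 * φ₃ / 3) ≠ 0)
    (hd₄ : Real.cosh (2 * η / 3) - Real.cos (2 * φ₄ / 3) ≠ 0)
    (hD1 : Complex.cos (2 * (θ₀ : ℂ) / 3) -
      Complex.cos (2 * (((θ : ℂ) + Complex.I * η) - Real.pi) / 3) ≠ 0)
    (hD2 : Complex.cos (2 * (θ₀ : ℂ) / 3) -
      Complex.cos (2 * (((θ : ℂ) + Complex.I * η) + Real.pi) / 3) ≠ 0)
    (hD3 : Complex.cos (2 * (θ₀ : ℂ) / 3) -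
      Complex.cos (2 * (((θ : ℂ) - Complex.I * η) - Real.pi) / 3) ≠ 0)
    (hD4 : Complex.cos (2 * (θ₀ : ℂ) / 3) -
      Complex.cos (2 * (((θ : ℂ) - Complex.I * η) + Real.pi) / 3) ≠ 0) :
    Complex.sin (2 * (θ₀ : ℂ) / 3) *
      (G ((θ : ℂ) + Complex.I * η) θ₀ - G ((θ : ℂ) - Complex.I * η) θ₀) =
      -Complex.I * (βtD : ℂ) := by
  simp only [G]
  rw [hβD, hβ₁, hβ₂, hβ₃, hβ₄, hφ₁, hφ₂, hφ₃, hφ₄]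
  push_cast
  have hc0 : Complex.cos (2*(θ₀:ℂ)/3) = ((Complex.exp (2*(θ₀:ℂ)/3*Complex.I)) + (Complex.exp (2*(θ₀:ℂ)/3*Complex.I))⁻¹)/2 := by
    rw [Complex.cos, show -(2*(θ₀:ℂ)/3)*Complex.I = -(2*(θ₀:ℂ)/3*Complex.I) from by ring, Complex.exp_neg]
  have hsin : Complex.sin (2*(θ₀:ℂ)/3) = -Complex.I * (((Complex.exp (2*(θ₀:ℂ)/3*Complex.I)) - (Complex.exp (2*(θ₀:ℂ)/3*Complex.I))⁻¹)/2) := by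
    rw [Complex.sin, show -(2*(θ₀:ℂ)/3)*Complex.I = -(2*(θ₀:ℂ)/3*Complex.I) from by ring, Complex.exp_neg]
    ring
  have hc1 : Complex.cos (2 * ((θ:ℂ) + Complex.I * (η:ℂ) - (Real.pi:ℂ)) / 3) = ((Complex.exp (2*(θ:ℂ)/3*Complex.I))*(Complex.exp (2*(η:ℂ)/3))⁻¹*(Complex.exp (2*(Real.pi:ℂ)/3*Complex.I))⁻¹ + (Complex.exp (2*(θ:ℂ)/3*Complex.I))⁻¹*(Complex.exp (2*(η:ℂ)/3))*(Complex.exp (2*(Real.pi:ℂ)/3*Complex.I)))/2 := by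
    rw [Complex.cos,
      show (2 * ((θ:ℂ) + Complex.I * (η:ℂ) - (Real.pi:ℂ)) / 3)*Complex.I = 2*(θ:ℂ)/3*Complex.I + -(2*(η:ℂ)/3) + -(2*(Real.pi:ℂ)/3*Complex.I) from by linear_combination (2*(η:ℂ)/3) * Complex.I_mul_I,
      show -(2 * ((θ:ℂ) + Complex.I * (η:ℂ) - (Real.pi:ℂ)) / 3)*Complex.I = -(2*(θ:ℂ)/3*Complex.I) + 2*(η:ℂ)/3 + 2*(Real.pi:ℂ)/3*Complex.I from by linear_combination (-(2*(η:ℂ)/3)) * Complex.I_mul_I]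
    simp only [Complex.exp_add, Complex.exp_neg]
  have hc2 : Complex.cos (2 * ((θ:ℂ) + Complex.I * (η:ℂ) + (Real.pi:ℂ)) / 3) = ((Complex.exp (2*(θ:ℂ)/3*Complex.I))*(Complex.exp (2*(η:ℂ)/3))⁻¹*(Complex.exp (2*(Real.pi:ℂ)/3*Complex.I)) + (Complex.exp (2*(θ:ℂ)/3*Complex.I))⁻¹*(Complex.exp (2*(η:ℂ)/3))*(Complex.exp (2*(Real.pi:ℂ)/3*Complex.I))⁻¹)/2 := by
    rw [Complex.cos,
      show (2 * ((θ:ℂ) + Complex.I * (η:ℂ) + (Real.pi:ℂ)) / 3)*Complex.I = 2*(θ:ℂ)/3*Complex.I + -(2*(η:ℂ)/3) + 2*(Real.pi:ℂ)/3*Complex.I from by linear_combination (2*(η:ℂ)/3) * Complex.I_mul_I,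
      show -(2 * ((θ:ℂ) + Complex.I * (η:ℂ) + (Real.pi:ℂ)) / 3)*Complex.I = -(2*(θ:ℂ)/3*Complex.I) + 2*(η:ℂ)/3 + -(2*(Real.pi:ℂ)/3*Complex.I) from by linear_combination (-(2*(η:ℂ)/3)) * Complex.I_mul_I]
    simp only [Complex.exp_add, Complex.exp_neg]
  have hc3 : Complex.cos (2 * ((θ:ℂ) - Complex.I * (η:ℂ) - (Real.pi:ℂ)) / 3) = ((Complex.exp (2*(θ:ℂ)/3*Complex.I))*(Complex.exp (2*(η:ℂ)/3))*(Complex.exp (2*(Real.pi:ℂ)/3*Complex.I))⁻¹ + (Complex.exp (2*(θ:ℂ)/3*Complex.I))⁻¹*(Complex.exp (2*(η:ℂ)/3))⁻¹*(Complex.exp (2*(Real.pi:ℂ)/3*Complex.I)))/2 := by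
    rw [Complex.cos,
      show (2 * ((θ:ℂ) - Complex.I * (η:ℂ) - (Real.pi:ℂ)) / 3)*Complex.I = 2*(θ:ℂ)/3*Complex.I + 2*(η:ℂ)/3 + -(2*(Real.pi:ℂ)/3*Complex.I) from by linear_combination (-(2*(η:ℂ)/3)) * Complex.I_mul_I,
      show -(2 * ((θ:ℂ) - Complex.I * (η:ℂ) - (Real.pi:ℂ)) / 3)*Complex.I = -(2*(θ:ℂ)/3*Complex.I) + -(2*(η:ℂ)/3) + 2*(Real.pi:ℂ)/3*Complex.I from by linear_combination (-(-(2*(η:ℂ)/3))) * Complex.I_mul_I]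
    simp only [Complex.exp_add, Complex.exp_neg]
  have hc4 : Complex.cos (2 * ((θ:ℂ) - Complex.I * (η:ℂ) + (Real.pi:ℂ)) / 3) = ((Complex.exp (2*(θ:ℂ)/3*Complex.I))*(Complex.exp (2*(η:ℂ)/3))*(Complex.exp (2*(Real.pi:ℂ)/3*Complex.I)) + (Complex.exp (2*(θ:ℂ)/3*Complex.I))⁻¹*(Complex.exp (2*(η:ℂ)/3))⁻¹*(Complex.exp (2*(Real.pi:ℂ)/3*Complex.I))⁻¹)/2 := by
    rw [Complex.cos,
      show (2 * ((θ:ℂ) - Complex.I * (η:ℂ) + (Real.pi:ℂ)) / 3)*Complex.I = 2*(θ:ℂ)/3*Complex.I + 2*(η:ℂ)/3 + 2*(Real.pi:ℂ)/3*Complex.I from by linear_combination (-(2*(η:ℂ)/3)) * Complex.I_mul_I,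
      show -(2 * ((θ:ℂ) - Complex.I * (η:ℂ) + (Real.pi:ℂ)) / 3)*Complex.I = -(2*(θ:ℂ)/3*Complex.I) + -(2*(η:ℂ)/3) + -(2*(Real.pi:ℂ)/3*Complex.I) from by linear_combination (-(-(2*(η:ℂ)/3))) * Complex.I_mul_I]
    simp only [Complex.exp_add, Complex.exp_neg]
  have hf1 : Complex.cos (2 * ((Real.pi:ℂ) + (θ₀:ℂ) + (θ:ℂ)) / 3) = ((Complex.exp (2*(Real.pi:ℂ)/3*Complex.I))*(Complex.exp (2*(θ₀:ℂ)/3*Complex.I))*(Complex.exp (2*(θ:ℂ)/3*Complex.I)) + (Complex.exp (2*(Real.pi:ℂ)/3*Complex.I))⁻¹*(Complex.exp (2*(θ₀:ℂ)/3*Complex.I))⁻¹*(Complex.exp (2*(θ:ℂ)/3*Complex.I))⁻¹)/2 := by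
    rw [Complex.cos,
      show (2 * ((Real.pi:ℂ) + (θ₀:ℂ) + (θ:ℂ)) / 3)*Complex.I = 2*(Real.pi:ℂ)/3*Complex.I + 2*(θ₀:ℂ)/3*Complex.I + 2*(θ:ℂ)/3*Complex.I from by push_cast; ring,
      show -(2 * ((Real.pi:ℂ) + (θ₀:ℂ) + (θ:ℂ)) / 3)*Complex.I = -(2*(Real.pi:ℂ)/3*Complex.I) + -(2*(θ₀:ℂ)/3*Complex.I) + -(2*(θ:ℂ)/3*Complex.I) from by push_cast; ring]
    simp only [Complex.exp_add, Complex.exp_neg]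
  have hf2 : Complex.cos (2 * ((Real.pi:ℂ) + (θ₀:ℂ) - (θ:ℂ)) / 3) = ((Complex.exp (2*(Real.pi:ℂ)/3*Complex.I))*(Complex.exp (2*(θ₀:ℂ)/3*Complex.I))*(Complex.exp (2*(θ:ℂ)/3*Complex.I))⁻¹ + (Complex.exp (2*(Real.pi:ℂ)/3*Complex.I))⁻¹*(Complex.exp (2*(θ₀:ℂ)/3*Complex.I))⁻¹*(Complex.exp (2*(θ:ℂ)/3*Complex.I)))/2 := by
    rw [Complex.cos,
      show (2 * ((Real.pi:ℂ) + (θ₀:ℂ) - (θ:ℂ)) / 3)*Complex.I = 2*(Real.pi:ℂ)/3*Complex.I + 2*(θ₀:ℂ)/3*Complex.I + -(2*(θ:ℂ)/3*Complex.I) from by push_cast; ring,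
      show -(2 * ((Real.pi:ℂ) + (θ₀:ℂ) - (θ:ℂ)) / 3)*Complex.I = -(2*(Real.pi:ℂ)/3*Complex.I) + -(2*(θ₀:ℂ)/3*Complex.I) + 2*(θ:ℂ)/3*Complex.I from by push_cast; ring]
    simp only [Complex.exp_add, Complex.exp_neg]
  have hf3 : Complex.cos (2 * ((Real.pi:ℂ) - (θ₀:ℂ) + (θ:ℂ)) / 3) = ((Complex.exp (2*(Real.pi:ℂ)/3*Complex.I))*(Complex.exp (2*(θ₀:ℂ)/3*Complex.I))⁻¹*(Complex.exp (2*(θ:ℂ)/3*Complex.I)) + (Complex.exp (2*(Real.pi:ℂ)/3*Complex.I))⁻¹*(Complex.exp (2*(θ₀:ℂ)/3*Complex.I))*(Complex.exp (2*(θ:ℂ)/3*Complex.I))⁻¹)/2 := by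
    rw [Complex.cos,
      show (2 * ((Real.pi:ℂ) - (θ₀:ℂ) + (θ:ℂ)) / 3)*Complex.I = 2*(Real.pi:ℂ)/3*Complex.I + -(2*(θ₀:ℂ)/3*Complex.I) + 2*(θ:ℂ)/3*Complex.I from by push_cast; ring,
      show -(2 * ((Real.pi:ℂ) - (θ₀:ℂ) + (θ:ℂ)) / 3)*Complex.I = -(2*(Real.pi:ℂ)/3*Complex.I) + 2*(θ₀:ℂ)/3*Complex.I + -(2*(θ:ℂ)/3*Complex.I) from by push_cast; ring]
    simp only [Complex.exp_add, Complex.exp_neg]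
  have hf4 : Complex.cos (2 * ((Real.pi:ℂ) - (θ₀:ℂ) - (θ:ℂ)) / 3) = ((Complex.exp (2*(Real.pi:ℂ)/3*Complex.I))*(Complex.exp (2*(θ₀:ℂ)/3*Complex.I))⁻¹*(Complex.exp (2*(θ:ℂ)/3*Complex.I))⁻¹ + (Complex.exp (2*(Real.pi:ℂ)/3*Complex.I))⁻¹*(Complex.exp (2*(θ₀:ℂ)/3*Complex.I))*(Complex.exp (2*(θ:ℂ)/3*Complex.I)))/2 := by
    rw [Complex.cos,
      show (2 * ((Real.pi:ℂ) - (θ₀:ℂ) - (θ:ℂ)) / 3)*Complex.I = 2*(Real.pi:ℂ)/3*Complex.I + -(2*(θ₀:ℂ)/3*Complex.I) + -(2*(θ:ℂ)/3*Complex.I) from by push_cast; ring,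
      show -(2 * ((Real.pi:ℂ) - (θ₀:ℂ) - (θ:ℂ)) / 3)*Complex.I = -(2*(Real.pi:ℂ)/3*Complex.I) + 2*(θ₀:ℂ)/3*Complex.I + 2*(θ:ℂ)/3*Complex.I from by push_cast; ring]
    simp only [Complex.exp_add, Complex.exp_neg]
  have hch : Complex.cosh (2*(η:ℂ)/3) = ((Complex.exp (2*(η:ℂ)/3)) + (Complex.exp (2*(η:ℂ)/3))⁻¹)/2 := by
    rw [Complex.cosh, Complex.exp_neg]
  have hsh : Complex.sinh (2*(η:ℂ)/3) = ((Complex.exp (2*(η:ℂ)/3)) - (Complex.exp (2*(η:ℂ)/3))⁻¹)/2 := by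
    rw [Complex.sinh, Complex.exp_neg]
  rw [hc0, hc1] at hD1
  rw [hc0, hc2] at hD2
  rw [hc0, hc3] at hD3
  rw [hc0, hc4] at hD4
  rw [hφ₁] at hd₁
  rw [hφ₂] at hd₂
  rw [hφ₃] at hd₃
  rw [hφ₄] at hd₄
  have hcd1 := Complex.ofReal_ne_zero.mpr hd₁
  push_cast at hcd1
  rw [hch, hf1] at hcd1
  have hcd2 := Complex.ofReal_ne_zero.mpr hd₂
  push_cast at hcd2
  rw [hch, hf2] at hcd2
  have hcd3 := Complex.ofReal_ne_zero.mpr hd₃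
  push_cast at hcd3
  rw [hch, hf3] at hcd3
  have hcd4 := Complex.ofReal_ne_zero.mpr hd₄
  push_cast at hcd4
  rw [hch, hf4] at hcd4
  rw [hsin, hc0, hc1, hc2, hc3, hc4, hsh, hch, hf1, hf2, hf3, hf4]
  have K := key_pf (Complex.exp (2*(θ₀:ℂ)/3*Complex.I)) (Complex.exp (2*(θ₀:ℂ)/3*Complex.I))⁻¹ (Complex.exp (2*(θ:ℂ)/3*Complex.I)) (Complex.exp (2*(θ:ℂ)/3*Complex.I))⁻¹ (Complex.exp (2*(Real.pi:ℂ)/3*Complex.I)) (Complex.exp (2*(Real.pi:ℂ)/3*Complex.I))⁻¹ (Complex.exp (2*(η:ℂ)/3)) (Complex.exp (2*(η:ℂ)/3))⁻¹ (mul_inv_cancel₀ (Complex.exp_ne_zero _)) (mul_inv_cancel₀ (Complex.exp_ne_zero _)) (mul_inv_cancel₀ (Complex.exp_ne_zero _)) (mul_inv_cancel₀ (Complex.exp_ne_zero _)) hD1 hD2 hD3 hD4 hcd1 hcd2 hcd3 hcd4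
  linear_combination (-Complex.I) * K
end

section
/- Let μ = -sin(θ₁) where θ₁ = a + ib is complex with π ≤ a ≤ 3π/2. Then the condition a < π - gd(b) (surface wave excitation on the face θ = 0) implies Re(μ) ≥ 0 and Im(μ) < Re(μ)/√(1 + (Re μ)²). -/
noncomputable def gd (x : ℝ) : ℝ := Real.arctan (Real.sinh x)

theorem surface_wave_admittance_condition (a b : ℝ) (θ₁ μ : ℂ)
    (hθ₁ : θ₁ = (a : ℂ) + (b : ℂ) * Complex.I)
    (ha : Real.pi ≤ a ∧ a ≤ 3 * Real.pi / 2)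
    (hμ : μ = -Complex.sin θ₁)
    (hcond : a < Real.pi - gd b) :
    0 ≤ μ.re ∧ μ.im < μ.re / Real.sqrt (1 + μ.re ^ 2) := by
  obtain ⟨ha1, ha2⟩ := ha
  have hpi := Real.pi_pos
  -- gd b < 0
  have hgd : gd b < 0 := by linarith
  have hsinh : Real.sinh b < 0 := by
    by_contra h
    push_neg at h
    have : Real.arctan 0 ≤ gd b := Real.arctan_strictMono.monotone h
    rw [Real.arctan_zero] at this
    linarith
  -- gd b > -π/2
  have hgd2 : -(Real.pi / 2) < gd b := Real.neg_pi_div_two_lt_arctan _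
  have ha3 : a < 3 * Real.pi / 2 := by linarith
  -- cos a < 0
  have hcos : Real.cos a < 0 := by
    apply Real.cos_neg_of_pi_div_two_lt_of_lt <;> linarith
  -- sin a ≤ 0
  have hsin : Real.sin a ≤ 0 := by
    have h1 : 0 ≤ Real.sin (a - Real.pi) :=
      Real.sin_nonneg_of_nonneg_of_le_pi (by linarith) (by linarith)
    rw [Real.sin_sub_pi] at h1
    linarith
  -- compute μ
  have hre : μ.re = -(Real.sin a * Real.cosh b) := by
    rw [hμ, hθ₁, Complex.sin_add, Complex.sin_mul_I, Complex.cos_mul_I]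
    simp [← Complex.ofReal_sin, ← Complex.ofReal_cos, ← Complex.ofReal_sinh, ← Complex.ofReal_cosh]
  have him : μ.im = -(Real.cos a * Real.sinh b) := by
    rw [hμ, hθ₁, Complex.sin_add, Complex.sin_mul_I, Complex.cos_mul_I]
    simp [← Complex.ofReal_sin, ← Complex.ofReal_cos, ← Complex.ofReal_sinh, ← Complex.ofReal_cosh]
  have hcosh : 0 < Real.cosh b := Real.cosh_pos b
  have hre0 : 0 ≤ μ.re := by
    rw [hre]
    nlinarith
  constructor
  · exact hre0
  · have him0 : μ.im < 0 := by
      rw [him]; nlinarith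
    have hrhs : 0 ≤ μ.re / Real.sqrt (1 + μ.re ^ 2) := by
      apply div_nonneg hre0 (Real.sqrt_nonneg _)
    linarith
end
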